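/- arXiv:1810.05941 — 2 statements merged into one kernel-verified Lean document; each statement's English description precedes it below -/
import Mathlib

section
/- For any non-bridge branch k in a connected DC network, the self-PTDF satisfies 0 < PTDF_{k,k} < 1. -/
/-- The action of the weighted graph Laplacian (DC power flow operator) on angles `θ`:
`(L θ) v = Σ_k B_k (θ_{i(k)} − θ_{j(k)}) ((e_{i(k)} − e_{j(k)}) v)`. -/
def lapOp {N E : ℕ} (ed : Fin E → Fin N × Fin N) (w : Fin E → ℝ) (θ : Fin N → ℝ) :
    Fin N → ℝ := fun v => ∑ k : Fin E, w k * (θ (ed k).1 - θ (ed k).2) *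
      ((if v = (ed k).1 then (1:ℝ) else 0) - (if v = (ed k).2 then (1:ℝ) else 0))

/-- DC flow on branch `k`: `f_k = B_k (θ_i − θ_j)`. -/
def lineFlow {N E : ℕ} (ed : Fin E → Fin N × Fin N) (w : Fin E → ℝ) (θ : Fin N → ℝ)
    (k : Fin E) : ℝ := w k * (θ (ed k).1 - θ (ed k).2)

/-- The network (restricted to branches of nonzero susceptance) is connected. -/
def connectedNet {N E : ℕ} (ed : Fin E → Fin N × Fin N) (w : Fin E → ℝ) : Prop :=
  ∀ u v : Fin N, Relation.ReflTransGen
    (fun a b => ∃ k : Fin E, w k ≠ 0 ∧ (ed k = (a, b) ∨ ed k = (b, a))) u v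

/-- Outage of branch `s`, modelled by zeroing its susceptance. -/
def removeLine {E : ℕ} (w : Fin E → ℝ) (s : Fin E) : Fin E → ℝ :=
  fun k => if k = s then 0 else w k

/-- Incidence vector `e_{i(k)} − e_{j(k)}` of branch `k`. -/
def incVec {N E : ℕ} (ed : Fin E → Fin N × Fin N) (k : Fin E) : Fin N → ℝ :=
  fun v => (if v = (ed k).1 then (1:ℝ) else 0) - (if v = (ed k).2 then (1:ℝ) else 0)

/-- Weighted graph Laplacian matrix `L = Σ_k B_k (e_i − e_j)(e_i − e_j)ᵀ`. -/
def lapM {N E : ℕ} (ed : Fin E → Fin N × Fin N) (w : Fin E → ℝ) :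
    Matrix (Fin N) (Fin N) ℝ :=
  fun u v => ∑ k : Fin E, w k * incVec ed k u * incVec ed k v

/-- `P` is the Moore–Penrose pseudoinverse of `L`. -/
def IsPseudoInv {N : ℕ} (L P : Matrix (Fin N) (Fin N) ℝ) : Prop :=
  L * P * L = L ∧ P * L * P = P ∧ Matrix.transpose (L * P) = L * P ∧ Matrix.transpose (P * L) = P * L

/-- Power transfer distribution factor
`PTDF_{m,k} = B_m (e_{i(m)} − e_{j(m)})ᵀ L⁺ (e_{i(k)} − e_{j(k)})`. -/
def ptdf {N E : ℕ} (ed : Fin E → Fin N × Fin N) (w : Fin E → ℝ)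
    (P : Matrix (Fin N) (Fin N) ℝ) (m k : Fin E) : ℝ :=
  w m * ∑ v : Fin N, incVec ed m v * P.mulVec (incVec ed k) v

/- ### Auxiliary lemmas -/

lemma incVec_dot {N E : ℕ} (ed : Fin E → Fin N × Fin N) (m : Fin E) (y : Fin N → ℝ) :
    ∑ v, incVec ed m v * y v = y (ed m).1 - y (ed m).2 := by
  simp [incVec, sub_mul, Finset.sum_sub_distrib]

lemma tri_sum {N E : ℕ} (f : Fin N → Fin N → Fin E → ℝ) :
    ∑ u : Fin N, ∑ v : Fin N, ∑ m : Fin E, f u v m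
      = ∑ m : Fin E, ∑ u : Fin N, ∑ v : Fin N, f u v m := by
  rw [Finset.sum_comm]
  refine (Finset.sum_congr rfl fun v _ => Finset.sum_comm).trans ?_
  rw [Finset.sum_comm]
  exact Finset.sum_congr rfl fun m _ => Finset.sum_comm

lemma quad_form {N E : ℕ} (ed : Fin E → Fin N × Fin N) (w : Fin E → ℝ) (y : Fin N → ℝ) :
    ∑ u, y u * (lapM ed w).mulVec y u = ∑ m, w m * (y (ed m).1 - y (ed m).2)^2 := by
  have h : ∀ m : Fin E, w m * (y (ed m).1 - y (ed m).2)^2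
      = ∑ u : Fin N, ∑ v : Fin N, w m * (incVec ed m u * y u) * (incVec ed m v * y v) := by
    intro m
    rw [show (y (ed m).1 - y (ed m).2)^2
        = (∑ u, incVec ed m u * y u) * (∑ v, incVec ed m v * y v) by
          rw [incVec_dot]; ring,
      Finset.sum_mul_sum, Finset.mul_sum]
    exact Finset.sum_congr rfl fun u _ => by
      rw [Finset.mul_sum]
      exact Finset.sum_congr rfl fun v _ => by ring
  simp only [h, Matrix.mulVec, dotProduct, lapM]
  rw [← tri_sum]
  refine Finset.sum_congr rfl fun u _ => ?_
  rw [Finset.mul_sum]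
  refine Finset.sum_congr rfl fun v _ => ?_
  rw [Finset.sum_mul, Finset.mul_sum]
  exact Finset.sum_congr rfl fun m _ => by ring

lemma mulVec_lapM {N E : ℕ} (ed : Fin E → Fin N × Fin N) (w : Fin E → ℝ) (y : Fin N → ℝ)
    (u : Fin N) :
    (lapM ed w).mulVec y u = ∑ m, w m * incVec ed m u * (y (ed m).1 - y (ed m).2) := by
  simp only [Matrix.mulVec, dotProduct, lapM, Finset.sum_mul]
  rw [Finset.sum_comm]
  refine Finset.sum_congr rfl fun m _ => ?_
  rw [← incVec_dot ed m y, Finset.mul_sum]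
  exact Finset.sum_congr rfl fun v _ => by ring

lemma const_of_eq_on_edges {N E : ℕ} (ed : Fin E → Fin N × Fin N) (w : Fin E → ℝ)
    (hconn : connectedNet ed w) (y : Fin N → ℝ)
    (h : ∀ m, w m ≠ 0 → y (ed m).1 = y (ed m).2) (u v : Fin N) : y u = y v := by
  induction hconn u v with
  | refl => rfl
  | tail _ hstep ih =>
    obtain ⟨m, hm, hor⟩ := hstep
    have hy := h m hm
    rcases hor with h1 | h1
    · exact ih.trans (by rw [h1] at hy; exact hy)
    · exact ih.trans (by rw [h1] at hy; exact hy.symm)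


/-- For any non-bridge branch `k` of a connected DC network with positive
susceptances, the self-PTDF satisfies `0 < PTDF_{k,k} < 1`. -/
theorem self_ptdf_between_zero_and_one {N E : ℕ} (ed : Fin E → Fin N × Fin N)
    (w : Fin E → ℝ) (hwpos : ∀ j, 0 < w j) (hconn : connectedNet ed w)
    (P : Matrix (Fin N) (Fin N) ℝ) (hP : IsPseudoInv (lapM ed w) P)
    (k : Fin E) (hne : (ed k).1 ≠ (ed k).2)
    (hnotbridge : connectedNet ed (removeLine w k)) :
    0 < ptdf ed w P k k ∧ ptdf ed w P k k < 1 := by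
  obtain ⟨hP1, hP2, hP3, hP4⟩ := hP
  set L := lapM ed w with hL
  set a := incVec ed k with ha
  set x := P.mulVec a with hx
  -- symmetry of L
  have hsym' : ∀ u v, L u v = L v u := by
    intro u v
    simp only [hL, lapM]
    exact Finset.sum_congr rfl fun m _ => by ring
  have hsym : L.transpose = L := by
    ext u v; exact hsym' v u
  -- a is orthogonal to ker L
  have hker : ∀ y : Fin N → ℝ, L.mulVec y = 0 → ∑ v, a v * y v = 0 := by
    intro y hy
    have hq : ∑ m, w m * (y (ed m).1 - y (ed m).2)^2 = 0 := by
      rw [← quad_form ed w y, ← hL, hy]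
      simp
    have hnn : ∀ i ∈ Finset.univ, (0:ℝ) ≤ w i * (y (ed i).1 - y (ed i).2)^2 :=
      fun i _ => mul_nonneg (hwpos i).le (sq_nonneg _)
    have hall : ∀ m : Fin E, y (ed m).1 = y (ed m).2 := by
      intro m
      have h0 := (Finset.sum_eq_zero_iff_of_nonneg hnn).1 hq m (Finset.mem_univ m)
      rcases mul_eq_zero.1 h0 with h | h
      · exact absurd h (hwpos m).ne'
      · exact sub_eq_zero.1 (pow_eq_zero_iff (by norm_num : (2:ℕ) ≠ 0) |>.1 h)
    have hc := const_of_eq_on_edges ed w hconn y (fun m _ => hall m)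
    rw [ha, incVec_dot, hc (ed k).1 (ed k).2, sub_self]
  -- L * (L * P) = L
  have hLM : L * (L * P) = L := by
    have h1 : L * (L * P) = (L * P * L.transpose).transpose := by
      rw [Matrix.transpose_mul, Matrix.transpose_transpose, hP3]
    rw [h1, hsym, hP1, hsym]
  -- L x = a
  have hr0 : L.mulVec (a - L.mulVec x) = 0 := by
    rw [Matrix.mulVec_sub, hx, Matrix.mulVec_mulVec, Matrix.mulVec_mulVec, Matrix.mul_assoc, hLM, sub_self]
  have hbil : ∀ y z : Fin N → ℝ, ∑ v, L.mulVec y v * z v = ∑ v, y v * L.mulVec z v := by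
    intro y z
    simp only [Matrix.mulVec, dotProduct, Finset.sum_mul, Finset.mul_sum]
    conv_lhs => rw [Finset.sum_comm]
    refine Finset.sum_congr rfl fun u _ => Finset.sum_congr rfl fun v _ => ?_
    rw [hsym' v u]; ring
  have hLxa : L.mulVec x = a := by
    set r := a - L.mulVec x with hrdef
    have h1 : ∑ v, a v * r v = 0 := hker r hr0
    have h2 : ∑ v, L.mulVec x v * r v = 0 := by
      rw [hbil x r, hr0]; simp
    have h3 : ∑ v, r v * r v = 0 := by
      have he : ∀ v, r v * r v = a v * r v - L.mulVec x v * r v := by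
        intro v
        have : r v = a v - L.mulVec x v := rfl
        rw [this]; ring
      rw [Finset.sum_congr rfl fun v _ => he v, Finset.sum_sub_distrib, h1, h2, sub_zero]
    have h4 : r = 0 := by
      funext v
      have hnn : ∀ i ∈ Finset.univ, (0:ℝ) ≤ r i * r i := fun i _ => mul_self_nonneg _
      exact mul_self_eq_zero.1 ((Finset.sum_eq_zero_iff_of_nonneg hnn).1 h3 v (Finset.mem_univ v))
    have h5 : a - L.mulVec x = 0 := h4
    exact (sub_eq_zero.1 h5).symm
  -- the quadratic form value t
  have key1 : ∑ v, a v * x v = ∑ m, w m * (x (ed m).1 - x (ed m).2)^2 := by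
    rw [← quad_form ed w x, ← hL]
    refine Finset.sum_congr rfl fun v _ => ?_
    rw [← hLxa]; ring
  have hdk : ∑ v, a v * x v = x (ed k).1 - x (ed k).2 := by
    rw [ha, incVec_dot]
  have hnnq : ∀ i ∈ Finset.univ, (0:ℝ) ≤ w i * (x (ed i).1 - x (ed i).2)^2 :=
    fun i _ => mul_nonneg (hwpos i).le (sq_nonneg _)
  -- t > 0
  have ht0 : 0 < ∑ v, a v * x v := by
    rcases (key1 ▸ Finset.sum_nonneg hnnq).lt_or_eq with h | h
    · exact h
    · exfalso
      have hz : ∀ m : Fin E, x (ed m).1 - x (ed m).2 = 0 := by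
        intro m
        have h0 := (Finset.sum_eq_zero_iff_of_nonneg hnnq).1 (key1.symm.trans h.symm) m (Finset.mem_univ m)
        rcases mul_eq_zero.1 h0 with hh | hh
        · exact absurd hh (hwpos m).ne'
        · exact pow_eq_zero_iff (by norm_num : (2:ℕ) ≠ 0) |>.1 hh
      have hza : a (ed k).1 = 0 := by
        rw [← hLxa, hL, mulVec_lapM]
        simp [hz]
      have hone : a (ed k).1 = 1 := by
        rw [ha]; simp [incVec, hne]
      rw [hza] at hone; norm_num at hone
  -- split the quadratic form
  have hsplit : ∑ m, w m * (x (ed m).1 - x (ed m).2)^2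
      = (∑ m, removeLine w k m * (x (ed m).1 - x (ed m).2)^2)
        + w k * (x (ed k).1 - x (ed k).2)^2 := by
    have he : ∀ m : Fin E, w m * (x (ed m).1 - x (ed m).2)^2
        = removeLine w k m * (x (ed m).1 - x (ed m).2)^2
          + (if m = k then w k * (x (ed k).1 - x (ed k).2)^2 else 0) := by
      intro m
      by_cases h : m = k
      · subst h; simp [removeLine]
      · simp [removeLine, h]
    rw [Finset.sum_congr rfl fun m _ => he m, Finset.sum_add_distrib]
    simp
  -- the removed-line quadratic form is positive
  have hQnn : ∀ i ∈ Finset.univ, (0:ℝ) ≤ removeLine w k i * (x (ed i).1 - x (ed i).2)^2 := by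
    intro i _
    refine mul_nonneg ?_ (sq_nonneg _)
    by_cases h : i = k <;> simp [removeLine, h, (hwpos i).le]
  have hQpos : 0 < ∑ m, removeLine w k m * (x (ed m).1 - x (ed m).2)^2 := by
    rcases (Finset.sum_nonneg hQnn).lt_or_eq with h | h
    · exact h
    · exfalso
      have hz : ∀ m : Fin E, removeLine w k m ≠ 0 → x (ed m).1 = x (ed m).2 := by
        intro m hm
        have h0 := (Finset.sum_eq_zero_iff_of_nonneg hQnn).1 h.symm m (Finset.mem_univ m)
        rcases mul_eq_zero.1 h0 with hh | hh
        · exact absurd hh hm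
        · exact sub_eq_zero.1 (pow_eq_zero_iff (by norm_num : (2:ℕ) ≠ 0) |>.1 hh)
      have hc := const_of_eq_on_edges ed (removeLine w k) hnotbridge x hz
      have : ∑ v, a v * x v = 0 := by
        rw [hdk, hc (ed k).1 (ed k).2, sub_self]
      rw [this] at ht0; exact lt_irrefl 0 ht0
  -- assemble
  have hpt : ptdf ed w P k k = w k * ∑ v, a v * x v := rfl
  constructor
  · rw [hpt]; exact mul_pos (hwpos k) ht0
  · rw [hpt]
    have h5 : w k * (∑ v, a v * x v)^2 < ∑ v, a v * x v := by
      have e2 : (∑ v, a v * x v)^2 = (x (ed k).1 - x (ed k).2)^2 := by rw [hdk]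
      have e3 := key1
      rw [hsplit] at e3
      rw [e2]
      linarith
    nlinarith [ht0, h5]
end

section
/- Switching a non-bridge branch s out of service changes the DC flow on any other branch m by exactly LODF_{m,s} · f_s, and therefore there exist networks and injections for which removing a line strictly decreases the absolute flow on an overloaded monitored line. -/
/-! Write `L` for the Laplacian and `e_s` for the incidence vector of branch `s`. Opening `s` removes
the term `f̃_s e_s` from `L θs`, where `f̃_s` is the flow `θs` would drive through `s` were it still in
service; hence `L (θs − θ) = f̃_s e_s`. With positive susceptances the kernel of `L` is constant
across every branch, so the branch flows of `θs − θ` are those of the pseudo-inverse solution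
`f̃_s L⁺ e_s`, namely `f̃_s PTDF_{k,s}`. At `k = s` this reads `f̃_s − f_s = f̃_s PTDF_{s,s}`, which
gives `f̃_s = f_s / (1 − PTDF_{s,s})`.

For relief, take a triangle with unit susceptances, injecting 1 at one bus and withdrawing it at
another: opening the branch from the source to the third bus makes that bus a leaf, and the flow on
the branch from it to the sink drops from 1/3 to 0. -/

section DCFlow

open Matrix

variable {N E : ℕ} (ed : Fin E → Fin N × Fin N) (w : Fin E → ℝ)

lemma incVec_dotProduct (k : Fin E) (g : Fin N → ℝ) :
    incVec ed k ⬝ᵥ g = g (ed k).1 - g (ed k).2 := by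
  simp [incVec, dotProduct, sub_mul, Finset.sum_sub_distrib, ite_mul]

lemma lineFlow_eq_dotProduct (θ : Fin N → ℝ) (k : Fin E) :
    lineFlow ed w θ k = w k * (incVec ed k ⬝ᵥ θ) := by
  rw [incVec_dotProduct, lineFlow]

lemma lapOp_eq_sum (θ : Fin N → ℝ) :
    lapOp ed w θ = ∑ k, lineFlow ed w θ k • incVec ed k := by
  ext v
  simp [lapOp, lineFlow, incVec, Finset.sum_apply]

lemma lapOp_eq_mulVec (θ : Fin N → ℝ) : lapOp ed w θ = lapM ed w *ᵥ θ := by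
  ext u
  simp only [lapOp_eq_sum, lineFlow_eq_dotProduct, Finset.sum_apply, Pi.smul_apply, smul_eq_mul,
    mulVec, lapM, dotProduct, Finset.sum_mul, Finset.mul_sum]
  rw [Finset.sum_comm]
  exact Finset.sum_congr rfl fun k _ => Finset.sum_congr rfl fun v _ => by ring

lemma lapOp_sub (θ θ' : Fin N → ℝ) : lapOp ed w (θ - θ') = lapOp ed w θ - lapOp ed w θ' := by
  simp only [lapOp_eq_mulVec, mulVec_sub]

lemma lineFlow_sub (θ θ' : Fin N → ℝ) (k : Fin E) :
    lineFlow ed w (θ - θ') k = lineFlow ed w θ k - lineFlow ed w θ' k := by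
  simp only [lineFlow, Pi.sub_apply]; ring

lemma lineFlow_removeLine_of_ne {s k : Fin E} (h : k ≠ s) (θ : Fin N → ℝ) :
    lineFlow ed (removeLine w s) θ k = lineFlow ed w θ k := by
  simp [lineFlow, removeLine, h]

lemma lapOp_eq_lapOp_removeLine_add (s : Fin E) (θ : Fin N → ℝ) :
    lapOp ed w θ = lapOp ed (removeLine w s) θ + lineFlow ed w θ s • incVec ed s := by
  have hsplit : ∀ k, lineFlow ed w θ k =
      lineFlow ed (removeLine w s) θ k + Pi.single (M := fun _ => ℝ) s (lineFlow ed w θ s) k := by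
    intro k
    by_cases hk : k = s
    · subst hk; simp [lineFlow, removeLine]
    · simp [lineFlow_removeLine_of_ne ed w hk, hk]
  rw [lapOp_eq_sum, lapOp_eq_sum, Finset.sum_congr rfl fun k _ => by rw [hsplit k, add_smul],
    Finset.sum_add_distrib]
  simp [Pi.single_apply, ite_smul]

lemma dotProduct_lapOp_self (θ : Fin N → ℝ) :
    θ ⬝ᵥ lapOp ed w θ = ∑ k, w k * (θ (ed k).1 - θ (ed k).2) ^ 2 := by
  rw [lapOp_eq_sum, dotProduct_sum]
  simp only [dotProduct_smul, smul_eq_mul, dotProduct_comm θ (incVec ed _), incVec_dotProduct,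
    lineFlow]
  exact Finset.sum_congr rfl fun k _ => by ring

lemma eq_of_lapOp_eq_zero (hw : ∀ j, 0 ≤ w j) {x : Fin N → ℝ} (hx : lapOp ed w x = 0)
    {k : Fin E} (hk : 0 < w k) : x (ed k).1 = x (ed k).2 := by
  have hsum : ∑ j, w j * (x (ed j).1 - x (ed j).2) ^ 2 = 0 := by
    rw [← dotProduct_lapOp_self, hx, dotProduct_zero]
  have hterm := (Finset.sum_eq_zero_iff_of_nonneg fun j _ => mul_nonneg (hw j) (sq_nonneg _)).mp
    hsum k (Finset.mem_univ k)
  have := pow_eq_zero_iff two_ne_zero |>.mp ((mul_eq_zero.mp hterm).resolve_left hk.ne')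
  exact sub_eq_zero.mp this

lemma lineFlow_mulVec_incVec (P : Matrix (Fin N) (Fin N) ℝ) (m s : Fin E) :
    lineFlow ed w (P *ᵥ incVec ed s) m = ptdf ed w P m s := by
  rw [lineFlow_eq_dotProduct]; rfl

lemma lineFlow_eq_mul_ptdf (hw : ∀ j, 0 < w j) {P : Matrix (Fin N) (Fin N) ℝ}
    (hP : lapM ed w * P * lapM ed w = lapM ed w) {x : Fin N → ℝ} {c : ℝ} {s : Fin E}
    (hx : lapOp ed w x = c • incVec ed s) (k : Fin E) :
    lineFlow ed w x k = c * ptdf ed w P k s := by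
  set y := P *ᵥ (c • incVec ed s)
  have hLy : lapOp ed w y = lapOp ed w x := by
    simp only [y, lapOp_eq_mulVec] at hx ⊢
    rw [← hx, mulVec_mulVec, mulVec_mulVec, hP]
  have hker : lapOp ed w (x - y) = 0 := by rw [lapOp_sub, hLy, sub_self]
  have hdiff : (x - y) (ed k).1 = (x - y) (ed k).2 :=
    eq_of_lapOp_eq_zero ed w (fun j => (hw j).le) hker (hw k)
  calc lineFlow ed w x k = lineFlow ed w y k := by
        simp only [lineFlow, Pi.sub_apply] at hdiff ⊢; linear_combination w k * hdiff
    _ = c * ptdf ed w P k s := by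
        simp only [y, mulVec_smul, lineFlow_eq_dotProduct, dotProduct_smul, smul_eq_mul]
        rw [← lineFlow_mulVec_incVec, lineFlow_eq_dotProduct]; ring

theorem lineFlow_removeLine_sub (hw : ∀ j, 0 < w j) {P : Matrix (Fin N) (Fin N) ℝ}
    (hP : lapM ed w * P * lapM ed w = lapM ed w) {θ θs : Fin N → ℝ} {m s : Fin E} (hms : m ≠ s)
    (hθs : lapOp ed (removeLine w s) θs = lapOp ed w θ) (hptdf : ptdf ed w P s s ≠ 1) :
    lineFlow ed (removeLine w s) θs m - lineFlow ed w θ m =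
      ptdf ed w P m s / (1 - ptdf ed w P s s) * lineFlow ed w θ s := by
  set c := lineFlow ed w θs s
  have hx : lapOp ed w (θs - θ) = c • incVec ed s := by
    rw [lapOp_sub, lapOp_eq_lapOp_removeLine_add ed w s θs, hθs, add_sub_cancel_left]
  have hchange : ∀ k, lineFlow ed w θs k - lineFlow ed w θ k = c * ptdf ed w P k s := fun k => by
    rw [← lineFlow_sub]; exact lineFlow_eq_mul_ptdf ed w hw hP hx k
  have hc : c * (1 - ptdf ed w P s s) = lineFlow ed w θ s := by linear_combination hchange s
  rw [lineFlow_removeLine_of_ne ed w hms, hchange m, ← hc]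
  field_simp [sub_ne_zero.mpr (Ne.symm hptdf)]

end DCFlow

section Connectivity

variable {N E : ℕ} {ed : Fin E → Fin N × Fin N} {w : Fin E → ℝ}

lemma connectedNet_of_hub (c : Fin N)
    (h : ∀ u ≠ c, ∃ k, w k ≠ 0 ∧ (ed k = (u, c) ∨ ed k = (c, u))) : connectedNet ed w := by
  have hc : ∀ u, Relation.ReflTransGen
      (fun a b => ∃ k, w k ≠ 0 ∧ (ed k = (a, b) ∨ ed k = (b, a))) u c := by
    intro u
    by_cases hu : u = c
    · rw [hu]
    · exact .single (h u hu)
  intro u v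
  exact (hc u).trans <| Relation.ReflTransGen.mono (fun _ _ ⟨k, hk, hab⟩ => ⟨k, hk, hab.symm⟩)
    _ _ (Relation.reflTransGen_swap.mpr (hc v))

lemma connectedNet.of_removeLine {s : Fin E} (h : connectedNet ed (removeLine w s)) :
    connectedNet ed w := fun u v =>
  Relation.ReflTransGen.mono
    (fun _ _ ⟨k, hk, hab⟩ => ⟨k, fun hw => hk (by simp [removeLine, hw]), hab⟩) u v (h u v)

end Connectivity

namespace Triangle

def edges : Fin 3 → Fin 3 × Fin 3 := ![(0, 1), (1, 2), (0, 2)]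

noncomputable def injection : Fin 3 → ℝ := ![0, 1, -1]

noncomputable def angles : Fin 3 → ℝ := ![0, 1 / 3, -1 / 3]

noncomputable def anglesSwitched : Fin 3 → ℝ := ![0, 1, 0]

lemma connectedNet_removeLine : connectedNet edges (removeLine 1 0) := by
  refine connectedNet_of_hub 2 fun u hu => ?_
  fin_cases u
  · exact ⟨2, by simp [removeLine], Or.inl rfl⟩
  · exact ⟨1, by simp [removeLine], Or.inl rfl⟩
  · exact absurd rfl hu

lemma lapOp_angles : lapOp edges 1 angles = injection := by
  ext v
  fin_cases v <;> simp [lapOp, edges, angles, injection, Fin.sum_univ_three] <;> norm_num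

lemma lapOp_removeLine_anglesSwitched :
    lapOp edges (removeLine 1 0) anglesSwitched = injection := by
  ext v
  fin_cases v <;> simp [lapOp, edges, anglesSwitched, injection, removeLine, Fin.sum_univ_three]

lemma lineFlow_angles : lineFlow edges 1 angles 2 = 1 / 3 := by
  simp [lineFlow, edges, angles]
  norm_num

lemma lineFlow_removeLine_anglesSwitched :
    lineFlow edges (removeLine 1 0) anglesSwitched 2 = 0 := by
  simp [lineFlow, edges, anglesSwitched]

end Triangle

theorem exists_removeLine_abs_lineFlow_lt :
    ∃ (N' E' : ℕ) (ed' : Fin E' → Fin N' × Fin N') (w' : Fin E' → ℝ)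
        (p' θ' θ's : Fin N' → ℝ) (R : ℝ) (m' s' : Fin E'),
      (∀ j, 0 < w' j) ∧ connectedNet ed' w' ∧ (∑ v, p' v) = 0 ∧
      lapOp ed' w' θ' = p' ∧ connectedNet ed' (removeLine w' s') ∧
      lapOp ed' (removeLine w' s') θ's = p' ∧
      R < |lineFlow ed' w' θ' m'| ∧
      |lineFlow ed' (removeLine w' s') θ's m'| < |lineFlow ed' w' θ' m'| := by
  refine ⟨3, 3, Triangle.edges, 1, Triangle.injection, Triangle.angles, Triangle.anglesSwitched,
    1 / 4, 2, 0, fun _ => one_pos, Triangle.connectedNet_removeLine.of_removeLine, ?_,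
    Triangle.lapOp_angles, Triangle.connectedNet_removeLine,
    Triangle.lapOp_removeLine_anglesSwitched, ?_, ?_⟩
  · simp [Triangle.injection, Fin.sum_univ_three]
  · rw [Triangle.lineFlow_angles]; norm_num
  · rw [Triangle.lineFlow_angles, Triangle.lineFlow_removeLine_anglesSwitched]; norm_num

theorem switching_flow_change_and_relief_exists_general {N E : ℕ}
    (ed : Fin E → Fin N × Fin N) (w : Fin E → ℝ)
    (hwpos : ∀ j, 0 < w j)
    (P : Matrix (Fin N) (Fin N) ℝ) (hP : IsPseudoInv (lapM ed w) P)
    (p θ θs : Fin N → ℝ) (m s : Fin E) (hms : m ≠ s)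
    (hθ : lapOp ed w θ = p)
    (hθs : lapOp ed (removeLine w s) θs = p)
    (hptdf : ptdf ed w P s s ≠ 1) :
    (lineFlow ed (removeLine w s) θs m - lineFlow ed w θ m =
      (ptdf ed w P m s / (1 - ptdf ed w P s s)) * lineFlow ed w θ s) ∧
    (∃ (N' E' : ℕ) (ed' : Fin E' → Fin N' × Fin N') (w' : Fin E' → ℝ)
        (p' θ' θ's : Fin N' → ℝ) (R : ℝ) (m' s' : Fin E'),
      (∀ j, 0 < w' j) ∧ connectedNet ed' w' ∧ (∑ v, p' v) = 0 ∧
      lapOp ed' w' θ' = p' ∧ connectedNet ed' (removeLine w' s') ∧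
      lapOp ed' (removeLine w' s') θ's = p' ∧
      R < |lineFlow ed' w' θ' m'| ∧
      |lineFlow ed' (removeLine w' s') θ's m'| < |lineFlow ed' w' θ' m'|) :=
  ⟨lineFlow_removeLine_sub ed w hwpos hP.1 hms (hθs.trans hθ.symm) hptdf,
    exists_removeLine_abs_lineFlow_lt⟩

/-- Switching out a non-bridge branch `s` changes the DC flow on any other
branch `m` by exactly `LODF_{m,s} f_s`; and there exist networks and injections for which
removing a line strictly decreases the absolute flow on an overloaded monitored line. -/
theorem switching_flow_change_and_relief_exists {N E : ℕ}
    (ed : Fin E → Fin N × Fin N) (w : Fin E → ℝ)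
    (hwpos : ∀ j, 0 < w j) (hconn : connectedNet ed w)
    (P : Matrix (Fin N) (Fin N) ℝ) (hP : IsPseudoInv (lapM ed w) P)
    (p θ θs : Fin N → ℝ) (m s : Fin E) (hms : m ≠ s)
    (hbal : (∑ v, p v) = 0)
    (hθ : lapOp ed w θ = p)
    (hnotbridge : connectedNet ed (removeLine w s))
    (hθs : lapOp ed (removeLine w s) θs = p)
    (hptdf : ptdf ed w P s s ≠ 1) :
    (lineFlow ed (removeLine w s) θs m - lineFlow ed w θ m =
      (ptdf ed w P m s / (1 - ptdf ed w P s s)) * lineFlow ed w θ s) ∧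
    (∃ (N' E' : ℕ) (ed' : Fin E' → Fin N' × Fin N') (w' : Fin E' → ℝ)
        (p' θ' θ's : Fin N' → ℝ) (R : ℝ) (m' s' : Fin E'),
      (∀ j, 0 < w' j) ∧ connectedNet ed' w' ∧ (∑ v, p' v) = 0 ∧
      lapOp ed' w' θ' = p' ∧ connectedNet ed' (removeLine w' s') ∧
      lapOp ed' (removeLine w' s') θ's = p' ∧
      R < |lineFlow ed' w' θ' m'| ∧
      |lineFlow ed' (removeLine w' s') θ's m'| < |lineFlow ed' w' θ' m'|) :=
  switching_flow_change_and_relief_exists_general ed w hwpos P hP p θ θs m s hms hθ hθs hptdf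
end
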